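/- Let P, Q, P∪Q be convex polytopes in ℝⁿ and partition the unit sphere into ω₁ = {u : h_P(u) = h_Q(u)}, ω₂ = {u : h_P(u) > h_Q(u)}, ω₃ = {u : h_P(u) < h_Q(u)}. Then for any Borel set η₂ ⊆ ω₂, the inverse Gauss images satisfy ν⁻¹_{P∪Q}(η₂) = ν⁻¹_P(η₂) and ν⁻¹_{P∩Q}(η₂) = ν⁻¹_Q(η₂), and hence the surface area measures satisfy S_{P∪Q}(η₂) = S_P(η₂) and S_{P∩Q}(η₂) = S_Q(η₂). -/

import Mathlib

open MeasureTheory RealInnerProductSpace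

/-- A (nonempty, compact) convex polytope: the convex hull of a nonempty finite set. -/
def IsPolytope {n : ℕ} (P : Set (EuclideanSpace ℝ (Fin n))) : Prop :=
  ∃ S : Finset (EuclideanSpace ℝ (Fin n)), S.Nonempty ∧
    P = convexHull ℝ (S : Set (EuclideanSpace ℝ (Fin n)))

/-- The support function. -/
noncomputable def suppFn {n : ℕ} (P : Set (EuclideanSpace ℝ (Fin n)))
    (u : EuclideanSpace ℝ (Fin n)) : ℝ :=
  sSup ((fun y => ⟪u, y⟫) '' P)

/-- The inverse Gauss image `ν⁻¹_P(η) = {x ∈ P : x·v = h_P(v) for some v ∈ η}`. -/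
def gaussInv {n : ℕ} (P : Set (EuclideanSpace ℝ (Fin n)))
    (η : Set (EuclideanSpace ℝ (Fin n))) : Set (EuclideanSpace ℝ (Fin n)) :=
  {x | x ∈ P ∧ ∃ v ∈ η, ⟪x, v⟫ = suppFn P v}

/-!
On directions `v` with `h_Q(v) < h_P(v)`, the support function of `P ∪ Q` is `max h_P h_Q = h_P`,
and no point of `Q` reaches the level `h_P(v)`, so `P ∪ Q` and `P` have the same face in
direction `v`. For the intersection, convexity of `P ∪ Q` forces the face of `Q` in direction `v`
into `P`: the segment from a point `x` of that face to a maximiser `p` of `⟪v, ·⟫` on `P` rises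
above the level `h_Q(v)` right after `x`, so it leaves `Q` and must run inside `P`; as `P` is
closed, `x ∈ P`. Hence `h_{P ∩ Q}(v) = h_Q(v)` and `P ∩ Q` and `Q` have the same face.
-/

theorem mem_of_isMaxOn_of_convex_union {E : Type*} [AddCommGroup E] [Module ℝ E]
    [TopologicalSpace E] [ContinuousAdd E] [ContinuousSMul ℝ E] {P Q : Set E}
    (hP : IsClosed P) (hU : Convex ℝ (P ∪ Q)) (f : E →ₗ[ℝ] ℝ) {x p : E}
    (hx : x ∈ Q) (hmax : IsMaxOn f Q x) (hp : p ∈ P) (hlt : f x < f p) : x ∈ P := by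
  have hseg : openSegment ℝ x p ⊆ P := by
    rintro _ ⟨a, b, ha, hb, hab, rfl⟩
    have hrise : f x < f (a • x + b • p) := by
      rw [map_add, map_smul, map_smul, smul_eq_mul, smul_eq_mul]
      calc f x = a * f x + b * f x := by rw [← add_mul, hab, one_mul]
        _ < a * f x + b * f p := by gcongr
    exact (hU (Or.inr hx) (Or.inl hp) ha.le hb.le hab).resolve_right
      fun hQ => (hmax hQ).not_gt hrise
  exact hP.closure_subset_iff.mpr hseg
    (segment_subset_closure_openSegment (left_mem_segment ℝ x p))

section SupportFunction

variable {n : ℕ} {P Q : Set (EuclideanSpace ℝ (Fin n))} {v x : EuclideanSpace ℝ (Fin n)}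

theorem IsPolytope.isCompact (hP : IsPolytope P) : IsCompact P := by
  obtain ⟨S, -, rfl⟩ := hP
  exact S.finite_toSet.isCompact_convexHull ℝ

theorem IsPolytope.nonempty (hP : IsPolytope P) : P.Nonempty := by
  obtain ⟨S, ⟨x, hx⟩, rfl⟩ := hP
  exact ⟨x, subset_convexHull ℝ _ hx⟩

theorem bddAbove_image_inner (hP : IsCompact P) (v : EuclideanSpace ℝ (Fin n)) :
    BddAbove ((fun y => ⟪v, y⟫) '' P) :=
  (hP.image (continuous_const.inner continuous_id)).bddAbove

theorem inner_le_suppFn (hP : IsCompact P) (hx : x ∈ P) : ⟪v, x⟫ ≤ suppFn P v :=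
  le_csSup (bddAbove_image_inner hP v) ⟨x, hx, rfl⟩

theorem isMaxOn_of_inner_eq_suppFn (hP : IsCompact P) (hx : ⟪v, x⟫ = suppFn P v) :
    IsMaxOn (innerₛₗ ℝ v) P x :=
  fun _ hy => (inner_le_suppFn hP hy).trans_eq hx.symm

theorem exists_inner_eq_suppFn (hP : IsCompact P) (hne : P.Nonempty)
    (v : EuclideanSpace ℝ (Fin n)) : ∃ x ∈ P, ⟪v, x⟫ = suppFn P v := by
  obtain ⟨x, hx, hsup⟩ := hP.exists_sSup_image_eq hne (f := fun y => ⟪v, y⟫)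
    (continuous_const.inner continuous_id).continuousOn
  exact ⟨x, hx, hsup.symm⟩

theorem suppFn_union (hP : IsCompact P) (hPne : P.Nonempty) (hQ : IsCompact Q)
    (hQne : Q.Nonempty) (v : EuclideanSpace ℝ (Fin n)) :
    suppFn (P ∪ Q) v = max (suppFn P v) (suppFn Q v) := by
  rw [suppFn, Set.image_union]
  exact csSup_union (bddAbove_image_inner hP v) (hPne.image _) (bddAbove_image_inner hQ v)
    (hQne.image _)

theorem mem_of_inner_eq_suppFn_of_lt (hP : IsCompact P) (hPne : P.Nonempty) (hQ : IsCompact Q)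
    (hU : Convex ℝ (P ∪ Q)) (hlt : suppFn Q v < suppFn P v) (hx : x ∈ Q)
    (hxv : ⟪v, x⟫ = suppFn Q v) : x ∈ P := by
  obtain ⟨p, hp, hpv⟩ := exists_inner_eq_suppFn hP hPne v
  exact mem_of_isMaxOn_of_convex_union hP.isClosed hU (innerₛₗ ℝ v) hx
    (isMaxOn_of_inner_eq_suppFn hQ hxv) hp (hxv.trans_lt (hlt.trans_eq hpv.symm))

theorem suppFn_inter_of_lt (hP : IsCompact P) (hPne : P.Nonempty) (hQ : IsCompact Q)
    (hQne : Q.Nonempty) (hU : Convex ℝ (P ∪ Q)) (hlt : suppFn Q v < suppFn P v) :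
    suppFn (P ∩ Q) v = suppFn Q v := by
  obtain ⟨y, hyQ, hyv⟩ := exists_inner_eq_suppFn hQ hQne v
  have hyP : y ∈ P := mem_of_inner_eq_suppFn_of_lt hP hPne hQ hU hlt hyQ hyv
  refine le_antisymm ?_ (hyv ▸ inner_le_suppFn (hQ.inter_left hP.isClosed) ⟨hyP, hyQ⟩)
  exact csSup_le_csSup (bddAbove_image_inner hQ v) (Set.Nonempty.image _ ⟨y, hyP, hyQ⟩)
    (Set.image_mono Set.inter_subset_right)

end SupportFunction

section GaussImage

variable {n : ℕ} {P Q : Set (EuclideanSpace ℝ (Fin n))} {η : Set (EuclideanSpace ℝ (Fin n))}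

theorem gaussInv_eq_of_subset {A B : Set (EuclideanSpace ℝ (Fin n))} (hBA : B ⊆ A)
    (hsupp : ∀ v ∈ η, suppFn A v = suppFn B v)
    (hface : ∀ v ∈ η, ∀ x ∈ A, ⟪v, x⟫ = suppFn A v → x ∈ B) :
    gaussInv A η = gaussInv B η := by
  ext x
  constructor
  · rintro ⟨hx, v, hv, hxv⟩
    rw [real_inner_comm] at hxv
    exact ⟨hface v hv x hx hxv, v, hv, by rw [real_inner_comm, hxv, hsupp v hv]⟩
  · rintro ⟨hx, v, hv, hxv⟩
    exact ⟨hBA hx, v, hv, by rw [hsupp v hv, hxv]⟩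

theorem gaussInv_union_of_lt (hP : IsCompact P) (hPne : P.Nonempty) (hQ : IsCompact Q)
    (hQne : Q.Nonempty) (hη : ∀ v ∈ η, suppFn Q v < suppFn P v) :
    gaussInv (P ∪ Q) η = gaussInv P η := by
  have hsupp : ∀ v ∈ η, suppFn (P ∪ Q) v = suppFn P v := fun v hv => by
    rw [suppFn_union hP hPne hQ hQne, max_eq_left (hη v hv).le]
  refine gaussInv_eq_of_subset Set.subset_union_left hsupp ?_
  rintro v hv _ (hxP | hxQ) hxv
  · exact hxP
  · rw [hsupp v hv] at hxv
    exact absurd (hxv ▸ inner_le_suppFn hQ hxQ) (hη v hv).not_ge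

theorem gaussInv_inter_of_lt (hP : IsCompact P) (hPne : P.Nonempty) (hQ : IsCompact Q)
    (hQne : Q.Nonempty) (hU : Convex ℝ (P ∪ Q)) (hη : ∀ v ∈ η, suppFn Q v < suppFn P v) :
    gaussInv (P ∩ Q) η = gaussInv Q η :=
  (gaussInv_eq_of_subset Set.inter_subset_right
    (fun v hv => (suppFn_inter_of_lt hP hPne hQ hQne hU (hη v hv)).symm)
    fun v hv _ hx hxv =>
      ⟨mem_of_inner_eq_suppFn_of_lt hP hPne hQ hU (hη v hv) hx hxv, hx⟩).symm

end GaussImage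

theorem gaussInv_union_inter_general {n : ℕ}
    (P Q : Set (EuclideanSpace ℝ (Fin n)))
    (hP : IsPolytope P) (hQ : IsPolytope Q) (hU : Convex ℝ (P ∪ Q))
    (η : Set (EuclideanSpace ℝ (Fin n)))
    (hη : η ⊆ {u | ‖u‖ = 1 ∧ suppFn Q u < suppFn P u}) :
    gaussInv (P ∪ Q) η = gaussInv P η ∧
    gaussInv (P ∩ Q) η = gaussInv Q η ∧
    μH[(n : ℝ) - 1] (gaussInv (P ∪ Q) η) = μH[(n : ℝ) - 1] (gaussInv P η) ∧
    μH[(n : ℝ) - 1] (gaussInv (P ∩ Q) η) = μH[(n : ℝ) - 1] (gaussInv Q η) := by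
  have hlt : ∀ v ∈ η, suppFn Q v < suppFn P v := fun v hv => (hη hv).2
  have hunion := gaussInv_union_of_lt hP.isCompact hP.nonempty hQ.isCompact hQ.nonempty hlt
  have hinter :=
    gaussInv_inter_of_lt hP.isCompact hP.nonempty hQ.isCompact hQ.nonempty hU hlt
  exact ⟨hunion, hinter, by rw [hunion], by rw [hinter]⟩

/-- On the part `ω₂` of the sphere where `h_P > h_Q`, the inverse Gauss images of `P ∪ Q`
and `P ∩ Q` agree with those of `P` and `Q` respectively, hence so do the surface area
measures (given by `(n-1)`-dimensional Hausdorff measure). -/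
theorem gaussInv_union_inter {n : ℕ}
    (P Q : Set (EuclideanSpace ℝ (Fin n)))
    (hP : IsPolytope P) (hQ : IsPolytope Q) (hU : Convex ℝ (P ∪ Q))
    (η : Set (EuclideanSpace ℝ (Fin n))) (hmeas : MeasurableSet η)
    (hη : η ⊆ {u | ‖u‖ = 1 ∧ suppFn Q u < suppFn P u}) :
    gaussInv (P ∪ Q) η = gaussInv P η ∧
    gaussInv (P ∩ Q) η = gaussInv Q η ∧
    μH[(n : ℝ) - 1] (gaussInv (P ∪ Q) η) = μH[(n : ℝ) - 1] (gaussInv P η) ∧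
    μH[(n : ℝ) - 1] (gaussInv (P ∩ Q) η) = μH[(n : ℝ) - 1] (gaussInv Q η) :=
  gaussInv_union_inter_general P Q hP hQ hU η hη
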